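/- In the root system of type B_n (n ≥ 2), the set of quantum roots equals the union of the long positive roots with the single short simple root α_n. -/

import Mathlib

/- A combinatorial framework for reduced crystallographic root systems with a
chosen system of simple roots, realized inside a real inner product space.
Weyl group elements are represented as plain functions `V → V` that are
compositions of simple reflections; `len` is the Coxeter length. -/

noncomputable section
open Classical
open scoped RealInnerProductSpace

namespace Pp

variable {V : Type*} [NormedAddCommGroup V] [InnerProductSpace ℝ V]

/-- The coroot pairing `⟨x, α^∨⟩ = 2⟨x,α⟩/⟨α,α⟩`. -/
def cpr (x α : V) : ℝ := 2 * ⟪x, α⟫ / ⟪α, α⟫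

/-- The reflection `s_α`, as a plain function. -/
def sref (α : V) : V → V := fun x => x - cpr x α • α

/-- `w` is a product of `n` reflections in simple roots taken from `Δ`. -/
def IsWord (Δ : Finset V) (w : V → V) (n : ℕ) : Prop :=
  ∃ l : List V, l.length = n ∧ (∀ α ∈ l, α ∈ Δ) ∧ w = (l.map sref).foldr (· ∘ ·) id

/-- The Weyl group generated by the simple reflections, as a set of functions. -/
def Weyl (Δ : Finset V) : Set (V → V) := { w | ∃ n, IsWord Δ w n }

/-- Coxeter length with respect to the simple system `Δ`. -/
def len (Δ : Finset V) (w : V → V) : ℕ := sInf { n | IsWord Δ w n }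

/-- The positive roots: roots which are nonnegative combinations of the
simple roots in `Δ`.  For a sub-system `Δ' ⊆ Δ`, `Pos Φ Δ'` is the set of
positive roots supported on `Δ'`. -/
def Pos (Φ Δ : Finset V) : Finset V :=
  Φ.filter fun β => ∃ c : V → ℝ, (∀ α ∈ Δ, 0 ≤ c α) ∧ β = ∑ α ∈ Δ, c α • α

/-- Half sum of positive roots. -/
def rho (Φ Δ : Finset V) : V := (2:ℝ)⁻¹ • ∑ β ∈ Pos Φ Δ, β

/-- The axioms of a reduced crystallographic root system `Φ` with simple
system `Δ`. -/
structure IsRS (Φ Δ : Finset V) : Prop where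
  zero_not_mem : (0:V) ∉ Φ
  neg_mem : ∀ α ∈ Φ, -α ∈ Φ
  reduced : ∀ α ∈ Φ, ∀ t : ℝ, t • α ∈ (Φ : Set V) → t = 1 ∨ t = -1
  cryst : ∀ α ∈ Φ, ∀ β ∈ Φ, ∃ k : ℤ, (k : ℝ) = cpr α β
  refl_mem : ∀ α ∈ Φ, ∀ β ∈ Φ, sref α β ∈ Φ
  simple_mem : ∀ α ∈ Δ, α ∈ Φ
  simple_indep : LinearIndependent ℝ (fun α : Δ => (α : V))
  pos_or_neg : ∀ β ∈ Φ, β ∈ Pos Φ Δ ∨ -β ∈ Pos Φ Δ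

/-- `β` is a quantum root: `ℓ(s_β) = ⟨2ρ, β^∨⟩ - 1`. -/
def IsQuantum (Φ Δ : Finset V) (β : V) : Prop :=
  (len Δ (sref β) : ℝ) = cpr ((2:ℝ) • rho Φ Δ) β - 1

/-- Minimal length coset representatives `W^P`: elements of `W` mapping the
positive roots of the parabolic (`Pos Φ ΔP`) to positive roots. -/
def MinRep (Φ Δ ΔP : Finset V) (w : V → V) : Prop :=
  w ∈ Weyl Δ ∧ ∀ β ∈ Pos Φ ΔP, w β ∈ Pos Φ Δ

/-- `θ` is the highest root. -/
def IsHighest (Φ Δ : Finset V) (θ : V) : Prop :=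
  θ ∈ Pos Φ Δ ∧ ∀ β ∈ Φ, ∃ c : V → ℝ, (∀ α ∈ Δ, 0 ≤ c α) ∧ θ - β = ∑ α ∈ Δ, c α • α

/-- All roots have the same length. -/
def SimplyLaced (Φ : Finset V) : Prop := ∀ α ∈ Φ, ∀ β ∈ Φ, ⟪α, α⟫ = ⟪β, β⟫

/-- The node `ι ∈ Δ` is minuscule: the coefficient of `α_ι^∨` in every coroot
is at most `1`. -/
def Minuscule (Φ Δ : Finset V) (ι : V) : Prop :=
  ∀ β ∈ Φ, ∀ c : V → ℝ,
    (2 / ⟪β, β⟫) • β = ∑ α ∈ Δ, c α • ((2 / ⟪α, α⟫) • α) → c ι ≤ 1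

/-- The node `ι ∈ Δ` is cominuscule: the coefficient of `α_ι` in every
positive root is at most `1`. -/
def Cominuscule (Φ Δ : Finset V) (ι : V) : Prop :=
  ∀ β ∈ Pos Φ Δ, ∀ c : V → ℝ,
    ((∀ α ∈ Δ, 0 ≤ c α) ∧ β = ∑ α ∈ Δ, c α • α) → c ι ≤ 1

/-- `(Φ, Δ)` is the root system of type `B_n` in the standard coordinates
given by the orthonormal family `e`. -/
def TypeBData (Φ Δ : Finset V) (n : ℕ) (e : Fin n → V) : Prop :=
  Orthonormal ℝ e ∧
  (Φ : Set V) =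
    ({v | ∃ i j : Fin n, i ≠ j ∧ (v = e i - e j ∨ v = e i + e j ∨ v = -(e i + e j))} ∪
     {v | ∃ i : Fin n, v = e i ∨ v = -(e i)}) ∧
  (Δ : Set V) =
    ({v | ∃ i : Fin n, ∃ h : (i : ℕ) + 1 < n, v = e i - e ⟨(i : ℕ) + 1, h⟩} ∪
     {v | ∃ h : 0 < n, v = e ⟨n - 1, by omega⟩})

/-- `(Φ, Δ)` is the root system of type `C_n` in the standard coordinates
given by the orthonormal family `e`. -/
def TypeCData (Φ Δ : Finset V) (n : ℕ) (e : Fin n → V) : Prop :=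
  Orthonormal ℝ e ∧
  (Φ : Set V) =
    ({v | ∃ i j : Fin n, i ≠ j ∧ (v = e i - e j ∨ v = e i + e j ∨ v = -(e i + e j))} ∪
     {v | ∃ i : Fin n, v = (2:ℝ) • e i ∨ v = -((2:ℝ) • e i)}) ∧
  (Δ : Set V) =
    ({v | ∃ i : Fin n, ∃ h : (i : ℕ) + 1 < n, v = e i - e ⟨(i : ℕ) + 1, h⟩} ∪
     {v | ∃ h : 0 < n, v = (2:ℝ) • e ⟨n - 1, by omega⟩})

/-- `γ` is the distinguished (quantum) root attached to the minuscule node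
`ι`: `γ = α_ι` in the simply-laced case, `γ = α_{n-1} + 2α_n = e_{n-1} + e_n`
in type `B_n` (with `ι = n`), and `γ = θ = 2e_1` in type `C_n` (with `ι = 1`). -/
def DistinguishedGamma (Φ Δ : Finset V) (ι γ : V) : Prop :=
  (SimplyLaced Φ ∧ γ = ι) ∨
  (∃ n : ℕ, ∃ _h : 2 ≤ n, ∃ e : Fin n → V, TypeBData Φ Δ n e ∧
    ι = e ⟨n - 1, by omega⟩ ∧ γ = e ⟨n - 2, by omega⟩ + e ⟨n - 1, by omega⟩) ∨
  (∃ n : ℕ, ∃ _h : 2 ≤ n, ∃ e : Fin n → V, TypeCData Φ Δ n e ∧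
    ι = e ⟨0, by omega⟩ - e ⟨1, by omega⟩ ∧ γ = (2:ℝ) • e ⟨0, by omega⟩)

end Pp

/-!
For any `β`, the involution `s_β` permutes the positive roots it keeps positive and negates
their pairing with `β^∨`; hence `⟨2ρ, β^∨⟩` is the sum of `⟨γ, β^∨⟩` over the inversions `γ`
of `s_β`. The term of `γ = β` is `2`, and when `β` has maximal length every other term is at
most `1`, because an integer `⟨γ, β^∨⟩ ≥ 2` with `‖γ‖ ≤ ‖β‖` forces `‖γ - β‖ = 0`. Since a word
of length `m` has at most `m` inversions, `ℓ(s_β) ≥ ⟨2ρ, β^∨⟩ - 1` for every long positive root.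

In type `B_n` (indices `0, …, n-1`), `⟨2ρ, α^∨⟩ = 2` for simple `α` gives `⟨2ρ, e_i⟩ = 2(n-i) - 1`.
Conjugating simple reflections gives words for `s_{e_i - e_j}`, `s_{e_i + e_j}` and `s_{e_i}` of
lengths `2(j-i) - 1`, `4n - 2i - 2j - 3` and `2(n-i) - 1`. For the long roots these lengths equal
`⟨2ρ, β^∨⟩ - 1`, while for `e_i` the target `⟨2ρ, e_i^∨⟩ - 1 = 4(n-i) - 3` is reached only
when `i = n - 1`, i.e. when `e_i` is simple.
-/

namespace Orthonormal

variable {V ι : Type*} [NormedAddCommGroup V] [InnerProductSpace ℝ V] {e : ι → V}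
  (he : Orthonormal ℝ e) {i j : ι}
include he

lemma real_inner_self (i : ι) : ⟪e i, e i⟫ = 1 :=
  inner_self_eq_one_of_norm_eq_one (he.norm_eq_one i)

lemma inner_sub_self_of_ne (hij : i ≠ j) : ⟪e i - e j, e i - e j⟫ = 2 := by
  simp only [inner_sub_left, inner_sub_right, he.real_inner_self, he.inner_eq_zero hij,
    he.inner_eq_zero hij.symm]
  norm_num

lemma inner_add_self_of_ne (hij : i ≠ j) : ⟪e i + e j, e i + e j⟫ = 2 := by
  simp only [inner_add_left, inner_add_right, he.real_inner_self, he.inner_eq_zero hij,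
    he.inner_eq_zero hij.symm]
  norm_num

end Orthonormal

namespace Pp

variable {V : Type*} [NormedAddCommGroup V] [InnerProductSpace ℝ V]

section Reflection

variable {α x y : V}

lemma cpr_add (x y α : V) : cpr (x + y) α = cpr x α + cpr y α := by
  simp only [cpr, inner_add_left]
  ring

lemma cpr_smul (c : ℝ) (x α : V) : cpr (c • x) α = c * cpr x α := by
  simp only [cpr, real_inner_smul_left]
  ring

lemma cpr_sum {ι : Type*} (s : Finset ι) (f : ι → V) (α : V) :
    cpr (∑ i ∈ s, f i) α = ∑ i ∈ s, cpr (f i) α := by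
  simp only [cpr, sum_inner, Finset.mul_sum, Finset.sum_div]

lemma cpr_self (hα : α ≠ 0) : cpr α α = 2 := by
  have : ⟪α, α⟫ ≠ 0 := inner_self_ne_zero.mpr hα
  simp only [cpr]
  field_simp

lemma cpr_eq_inner_of_inner_self_eq_two (hα : ⟪α, α⟫ = 2) (x : V) : cpr x α = ⟪x, α⟫ := by
  simp only [cpr, hα]
  ring

lemma sref_self (α : V) : sref α α = -α := by
  rcases eq_or_ne α 0 with rfl | hα
  · simp [sref]
  · rw [sref, cpr_self hα]
    module

lemma cpr_sref (α x : V) : cpr (sref α x) α = -cpr x α := by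
  rcases eq_or_ne α 0 with rfl | hα
  · simp [cpr]
  · rw [sref, sub_eq_add_neg, cpr_add, ← neg_smul, cpr_smul, cpr_self hα]
    ring

lemma sref_sref (α x : V) : sref α (sref α x) = x := by
  conv_lhs => rw [sref, cpr_sref]
  simp only [sref, neg_smul, sub_neg_eq_add, sub_add_cancel]

lemma sref_injective (α : V) : Function.Injective (sref α) :=
  Function.LeftInverse.injective (sref_sref α)

lemma sref_sub_smul (α x y : V) (c : ℝ) : sref α (x - c • y) = sref α x - c • sref α y := by
  simp only [sref, sub_eq_add_neg, cpr_add, ← neg_smul, cpr_smul]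
  module

lemma inner_sref_sref (α x y : V) : ⟪sref α x, sref α y⟫ = ⟪x, y⟫ := by
  simp only [sref, cpr, inner_sub_left, inner_sub_right, real_inner_smul_left,
    real_inner_smul_right, real_inner_comm α]
  rcases eq_or_ne ⟪α, α⟫ 0 with h | h
  · simp only [h, div_zero, mul_zero, zero_mul, sub_zero]
  · field_simp
    ring

lemma cpr_sref_sref (α x y : V) : cpr (sref α x) (sref α y) = cpr x y := by
  simp only [cpr, inner_sref_sref]

lemma sref_sref_eq_comp (α β : V) : sref (sref α β) = sref α ∘ sref β ∘ sref α := by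
  funext x
  have : sref α (sref β (sref α x)) = x - cpr (sref α x) β • sref α β := by
    rw [show sref β (sref α x) = sref α x - cpr (sref α x) β • β from rfl, sref_sub_smul,
      sref_sref]
  rw [Function.comp_apply, Function.comp_apply, this, ← cpr_sref_sref α, sref_sref]
  rfl

lemma eq_of_inner_self_le_of_inner_self_le_inner (h₁ : ⟪x, x⟫ ≤ ⟪y, y⟫) (h₂ : ⟪y, y⟫ ≤ ⟪x, y⟫) :
    x = y := by
  have : ⟪x - y, x - y⟫ ≤ 0 := by
    rw [inner_sub_sub_self, real_inner_comm x y]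
    linarith
  exact sub_eq_zero.mp (real_inner_self_nonpos.mp this)

end Reflection

section Words

variable {Δ : Finset V} {w w₁ w₂ : V → V} {m m₁ m₂ : ℕ}

lemma isWord_zero_iff : IsWord Δ w 0 ↔ w = id := by
  refine ⟨fun ⟨l, hl, _, hw⟩ => by simp_all, fun hw => ⟨[], rfl, by simp, by simp [hw]⟩⟩

lemma isWord_succ_iff : IsWord Δ w (m + 1) ↔ ∃ α ∈ Δ, ∃ w', IsWord Δ w' m ∧ w = sref α ∘ w' := by
  constructor
  · rintro ⟨_ | ⟨α, l⟩, hl, hΔ, rfl⟩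
    · simp at hl
    · exact ⟨α, hΔ α (by simp), _, ⟨l, by simpa using hl, fun β hβ => hΔ β (by simp [hβ]), rfl⟩,
        rfl⟩
  · rintro ⟨α, hα, w', ⟨l, hl, hΔ, rfl⟩, rfl⟩
    exact ⟨α :: l, by simp [hl], by simpa [hα] using hΔ, rfl⟩

lemma isWord_sref (hα : α ∈ Δ) : IsWord Δ (sref α) 1 :=
  isWord_succ_iff.mpr ⟨α, hα, id, isWord_zero_iff.mpr rfl, rfl⟩

lemma IsWord.comp (h₁ : IsWord Δ w₁ m₁) (h₂ : IsWord Δ w₂ m₂) : IsWord Δ (w₁ ∘ w₂) (m₁ + m₂) := by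
  induction m₁ generalizing w₁ with
  | zero => rw [isWord_zero_iff.mp h₁, zero_add]; exact h₂
  | succ m ih =>
    obtain ⟨α, hα, w', hw', rfl⟩ := isWord_succ_iff.mp h₁
    rw [Nat.add_right_comm]
    exact isWord_succ_iff.mpr ⟨α, hα, w' ∘ w₂, ih hw', rfl⟩

lemma IsWord.sref_sref {α β : V} {k : ℕ} (hα : IsWord Δ (sref α) k) (hβ : IsWord Δ (sref β) m) :
    IsWord Δ (sref (sref α β)) (k + m + k) := by
  rw [sref_sref_eq_comp, add_assoc]
  exact hα.comp (hβ.comp hα)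

lemma IsWord.injective (h : IsWord Δ w m) : Function.Injective w := by
  induction m generalizing w with
  | zero => rw [isWord_zero_iff.mp h]; exact Function.injective_id
  | succ m ih =>
    obtain ⟨α, -, w', hw', rfl⟩ := isWord_succ_iff.mp h
    exact (sref_injective α).comp (ih hw')

lemma IsWord.len_le (h : IsWord Δ w m) : len Δ w ≤ m :=
  Nat.sInf_le h

lemma IsWord.isWord_len (h : IsWord Δ w m) : IsWord Δ w (len Δ w) :=
  Nat.sInf_mem (s := {k | IsWord Δ w k}) ⟨m, h⟩

end Words

section Inversions

variable {Φ Δ : Finset V} {α β γ : V} {w : V → V} {m : ℕ}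

def inversions (Φ Δ : Finset V) (w : V → V) : Finset V :=
  (Pos Φ Δ).filter fun γ => w γ ∉ Pos Φ Δ

lemma two_smul_rho (Φ Δ : Finset V) : (2:ℝ) • rho Φ Δ = ∑ β ∈ Pos Φ Δ, β := by
  rw [rho, smul_smul]
  norm_num

lemma cpr_two_rho_eq_sum_inversions (Φ Δ : Finset V) (β : V) :
    cpr ((2:ℝ) • rho Φ Δ) β = ∑ γ ∈ inversions Φ Δ (sref β), cpr γ β := by
  rw [two_smul_rho, cpr_sum, inversions,
    ← Finset.sum_filter_add_sum_filter_not (Pos Φ Δ) (fun γ => sref β γ ∉ Pos Φ Δ), add_eq_left]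
  refine Finset.sum_involution (fun γ _ => sref β γ)
    (fun γ _ => by rw [cpr_sref, add_neg_cancel]) (fun γ _ hγ hfix => hγ ?_)
    (fun γ hγ => ?_) (fun γ _ => sref_sref β γ)
  · have : cpr γ β • β = 0 := by
      rw [← sub_eq_self]
      exact hfix
    rcases smul_eq_zero.mp this with h | rfl
    · exact h
    · simp [cpr]
  · simp only [Finset.mem_filter, not_not] at hγ ⊢
    exact ⟨hγ.2, by rw [sref_sref]; exact hγ.1⟩

namespace IsRS

variable (hRS : IsRS Φ Δ)
include hRS

lemma ne_zero (hβ : β ∈ Φ) : β ≠ 0 :=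
  fun h => hRS.zero_not_mem (h ▸ hβ)

lemma eq_zero_of_sum_smul_eq_zero {c : V → ℝ} (h : ∑ α ∈ Δ, c α • α = 0) :
    ∀ α ∈ Δ, c α = 0 := by
  have := Fintype.linearIndependent_iff.mp hRS.simple_indep (fun α => c α)
    (by rw [Finset.sum_coe_sort Δ (fun α => c α • α)]; exact h)
  exact fun α hα => this ⟨α, hα⟩

lemma neg_notMem_pos (hβ : β ∈ Pos Φ Δ) : -β ∉ Pos Φ Δ := by
  intro hneg
  obtain ⟨hβΦ, c, hc, hβc⟩ := Finset.mem_filter.mp hβ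
  obtain ⟨-, d, hd, hβd⟩ := Finset.mem_filter.mp hneg
  have h0 := hRS.eq_zero_of_sum_smul_eq_zero (c := c + d)
    (by simp only [Pi.add_apply, add_smul, Finset.sum_add_distrib, ← hβc, ← hβd, add_neg_cancel])
  refine hRS.ne_zero hβΦ (hβc.trans (Finset.sum_eq_zero fun α hα => ?_))
  rw [show c α = 0 by linarith [show c α + d α = 0 from h0 α hα, hc α hα, hd α hα], zero_smul]

lemma simple_mem_pos (hα : α ∈ Δ) : α ∈ Pos Φ Δ := by
  refine Finset.mem_filter.mpr ⟨hRS.simple_mem α hα, fun γ => if γ = α then 1 else 0,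
    fun γ _ => by dsimp only; split_ifs <;> norm_num, ?_⟩
  simp [ite_smul, hα]

lemma sref_mem_pos_of_simple (hα : α ∈ Δ) (hβ : β ∈ Pos Φ Δ) (hne : β ≠ α) :
    sref α β ∈ Pos Φ Δ := by
  obtain ⟨hβΦ, c, hc, hβc⟩ := Finset.mem_filter.mp hβ
  refine (hRS.pos_or_neg _ (hRS.refl_mem α (hRS.simple_mem α hα) β hβΦ)).resolve_right
    fun hneg => hne ?_
  obtain ⟨-, d, hd, hβd⟩ := Finset.mem_filter.mp hneg
  -- `β - s_α β` is a multiple of `α`, so `β` has no support outside `α`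
  have hzero : ∀ γ ∈ Δ, γ ≠ α → c γ = 0 := by
    have h := hRS.eq_zero_of_sum_smul_eq_zero
      (c := fun γ => c γ + d γ - if γ = α then cpr β α else 0) (by
        simp only [sub_smul, add_smul, ite_smul, zero_smul, Finset.sum_sub_distrib,
          Finset.sum_add_distrib, Finset.sum_ite_eq', if_pos hα, ← hβc, ← hβd, sref]
        abel)
    intro γ hγ hγα
    have := h γ hγ
    simp only [hγα, if_false, sub_zero] at this
    linarith [hc γ hγ, hd γ hγ]
  have hβα : β = c α • α := by
    rw [hβc]
    exact Finset.sum_eq_single_of_mem α hα fun γ hγ hγα => by rw [hzero γ hγ hγα, zero_smul]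
  rcases hRS.reduced α (hRS.simple_mem α hα) (c α) (by rw [← hβα]; exact hβΦ) with h | h
  · rw [hβα, h, one_smul]
  · exact absurd (hc α hα) (by rw [h]; norm_num)

lemma mem_inversions_sref_self (hβ : β ∈ Pos Φ Δ) : β ∈ inversions Φ Δ (sref β) :=
  Finset.mem_filter.mpr ⟨hβ, by rw [sref_self]; exact hRS.neg_notMem_pos hβ⟩

lemma inversions_sref_of_simple (hα : α ∈ Δ) : inversions Φ Δ (sref α) = {α} := by
  ext γ
  rw [Finset.mem_singleton]
  constructor
  · intro hγ
    obtain ⟨hγP, hγα⟩ := Finset.mem_filter.mp hγ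
    by_contra hne
    exact hγα (hRS.sref_mem_pos_of_simple hα hγP hne)
  · rintro rfl
    exact hRS.mem_inversions_sref_self (hRS.simple_mem_pos hα)

lemma card_inversions_sref_comp_le (hα : α ∈ Δ) (hw : Function.Injective w) :
    (inversions Φ Δ (sref α ∘ w)).card ≤ (inversions Φ Δ w).card + 1 := by
  have hsub : inversions Φ Δ (sref α ∘ w) ⊆
      inversions Φ Δ w ∪ (Pos Φ Δ).filter (fun γ => w γ = α) := by
    intro γ hγ
    simp only [inversions, Finset.mem_filter, Finset.mem_union, Function.comp_apply] at hγ ⊢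
    by_cases hwγ : w γ ∈ Pos Φ Δ
    · exact Or.inr ⟨hγ.1, by_contra fun hne => hγ.2 (hRS.sref_mem_pos_of_simple hα hwγ hne)⟩
    · exact Or.inl ⟨hγ.1, hwγ⟩
  have hone : ((Pos Φ Δ).filter (fun γ => w γ = α)).card ≤ 1 :=
    Finset.card_le_one.mpr fun x hx y hy =>
      hw ((Finset.mem_filter.mp hx).2.trans (Finset.mem_filter.mp hy).2.symm)
  calc _ ≤ _ := Finset.card_le_card hsub
    _ ≤ _ := Finset.card_union_le _ _
    _ ≤ _ := by omega

lemma card_inversions_le_of_isWord (h : IsWord Δ w m) : (inversions Φ Δ w).card ≤ m := by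
  induction m generalizing w with
  | zero => simp [isWord_zero_iff.mp h, inversions]
  | succ m ih =>
    obtain ⟨α, hα, w', hw', rfl⟩ := isWord_succ_iff.mp h
    exact (hRS.card_inversions_sref_comp_le hα hw'.injective).trans (by have := ih hw'; omega)

lemma card_inversions_le_len (h : IsWord Δ w m) : (inversions Φ Δ w).card ≤ len Δ w :=
  hRS.card_inversions_le_of_isWord h.isWord_len

lemma cpr_two_rho_of_simple (hα : α ∈ Δ) : cpr ((2:ℝ) • rho Φ Δ) α = 2 := by
  rw [cpr_two_rho_eq_sum_inversions, hRS.inversions_sref_of_simple hα, Finset.sum_singleton,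
    cpr_self (hRS.ne_zero (hRS.simple_mem α hα))]

lemma inner_two_rho_of_simple (hα : α ∈ Δ) : ⟪(2:ℝ) • rho Φ Δ, α⟫ = ⟪α, α⟫ := by
  have h := hRS.cpr_two_rho_of_simple hα
  have : ⟪α, α⟫ ≠ 0 := inner_self_ne_zero.mpr (hRS.ne_zero (hRS.simple_mem α hα))
  rw [cpr] at h
  field_simp at h
  linarith

lemma inner_two_rho_pos (hβ : β ∈ Pos Φ Δ) : 0 < ⟪(2:ℝ) • rho Φ Δ, β⟫ := by
  obtain ⟨hβΦ, c, hc, hβc⟩ := Finset.mem_filter.mp hβ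
  obtain ⟨α, hα, hcα⟩ : ∃ α ∈ Δ, c α ≠ 0 := by
    by_contra! h
    exact hRS.ne_zero hβΦ (hβc.trans (Finset.sum_eq_zero fun α hα => by rw [h α hα, zero_smul]))
  have hsimple : ∀ α ∈ Δ, 0 < ⟪α, α⟫ := fun α hα =>
    real_inner_self_pos.mpr (hRS.ne_zero (hRS.simple_mem α hα))
  rw [hβc, inner_sum]
  refine Finset.sum_pos' (fun α hα => ?_) ⟨α, hα, ?_⟩
  · rw [real_inner_smul_right, hRS.inner_two_rho_of_simple hα]
    exact mul_nonneg (hc α hα) (hsimple α hα).le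
  · rw [real_inner_smul_right, hRS.inner_two_rho_of_simple hα]
    exact mul_pos ((hc α hα).lt_of_ne' hcα) (hsimple α hα)

lemma len_sref_of_simple (hα : α ∈ Δ) : len Δ (sref α) = 1 := by
  have hw := isWord_sref hα
  have := hRS.card_inversions_le_len hw
  rw [hRS.inversions_sref_of_simple hα, Finset.card_singleton] at this
  exact le_antisymm hw.len_le this

lemma isQuantum_of_simple (hα : α ∈ Δ) : IsQuantum Φ Δ α := by
  rw [IsQuantum, hRS.len_sref_of_simple hα, hRS.cpr_two_rho_of_simple hα]
  norm_num

lemma cpr_le_one_of_inner_self_le (hγ : γ ∈ Φ) (hβ : β ∈ Φ) (hne : γ ≠ β)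
    (hle : ⟪γ, γ⟫ ≤ ⟪β, β⟫) : cpr γ β ≤ 1 := by
  obtain ⟨k, hk⟩ := hRS.cryst γ hγ β hβ
  have hβ0 : 0 < ⟪β, β⟫ := real_inner_self_pos.mpr (hRS.ne_zero hβ)
  by_contra! hlt
  have h2 : (2:ℝ) ≤ cpr γ β := by
    rw [← hk] at hlt ⊢
    have : (1:ℤ) < k := by exact_mod_cast hlt
    exact_mod_cast (show (2:ℤ) ≤ k by omega)
  rw [cpr, le_div_iff₀ hβ0] at h2
  exact hne (eq_of_inner_self_le_of_inner_self_le_inner hle (by linarith))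

lemma cpr_two_rho_le_card_inversions_add_one (hβ : β ∈ Pos Φ Δ)
    (hlong : ∀ γ ∈ Φ, ⟪γ, γ⟫ ≤ ⟪β, β⟫) :
    cpr ((2:ℝ) • rho Φ Δ) β ≤ (inversions Φ Δ (sref β)).card + 1 := by
  have hβΦ := (Finset.mem_filter.mp hβ).1
  have hmem := hRS.mem_inversions_sref_self hβ
  have hterm : ∀ γ ∈ (inversions Φ Δ (sref β)).erase β, cpr γ β ≤ 1 := fun γ hγ => by
    obtain ⟨hne, hγinv⟩ := Finset.mem_erase.mp hγ
    have hγΦ := (Finset.mem_filter.mp (Finset.mem_filter.mp hγinv).1).1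
    exact hRS.cpr_le_one_of_inner_self_le hγΦ hβΦ hne (hlong γ hγΦ)
  calc cpr ((2:ℝ) • rho Φ Δ) β
      = cpr β β + ∑ γ ∈ (inversions Φ Δ (sref β)).erase β, cpr γ β := by
        rw [cpr_two_rho_eq_sum_inversions, Finset.add_sum_erase _ (fun γ => cpr γ β) hmem]
    _ ≤ 2 + ((inversions Φ Δ (sref β)).erase β).card • (1:ℝ) :=
        add_le_add (cpr_self (hRS.ne_zero hβΦ)).le (Finset.sum_le_card_nsmul _ _ _ hterm)
    _ = (inversions Φ Δ (sref β)).card + 1 := by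
        rw [nsmul_eq_mul, mul_one, Finset.card_erase_of_mem hmem,
          Nat.cast_pred (Finset.card_pos.mpr ⟨β, hmem⟩)]
        ring

lemma isQuantum_of_isWord (hβ : β ∈ Pos Φ Δ) (hlong : ∀ γ ∈ Φ, ⟪γ, γ⟫ ≤ ⟪β, β⟫)
    (hw : IsWord Δ (sref β) m) (hm : (m:ℝ) + 1 ≤ cpr ((2:ℝ) • rho Φ Δ) β) :
    IsQuantum Φ Δ β := by
  have h₁ : (len Δ (sref β) : ℝ) ≤ m := by exact_mod_cast hw.len_le
  have h₂ : ((inversions Φ Δ (sref β)).card : ℝ) ≤ len Δ (sref β) := by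
    exact_mod_cast hRS.card_inversions_le_len hw
  have h₃ := hRS.cpr_two_rho_le_card_inversions_add_one hβ hlong
  rw [IsQuantum]
  linarith

end IsRS

end Inversions

section Orthonormal

variable {ι : Type*} {e : ι → V} (he : Orthonormal ℝ e) {i j k : ι}
include he

lemma sref_sub_apply_right (hij : i ≠ j) : sref (e i - e j) (e j) = e i := by
  rw [sref, cpr_eq_inner_of_inner_self_eq_two (he.inner_sub_self_of_ne hij), inner_sub_right,
    he.real_inner_self, he.inner_eq_zero hij.symm]
  module

lemma sref_sub_apply_sub (hij : i ≠ j) (hik : i ≠ k) (hjk : j ≠ k) :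
    sref (e i - e j) (e j - e k) = e i - e k := by
  rw [sref, cpr_eq_inner_of_inner_self_eq_two (he.inner_sub_self_of_ne hij)]
  simp only [inner_sub_left, inner_sub_right, he.real_inner_self, he.inner_eq_zero hij.symm,
    he.inner_eq_zero hjk.symm, he.inner_eq_zero hik.symm]
  module

lemma sref_apply_sub_right (hij : i ≠ j) : sref (e j) (e i - e j) = e i + e j := by
  rw [sref, cpr, inner_sub_left, he.real_inner_self, he.inner_eq_zero hij]
  module

end Orthonormal

namespace TypeBData

variable {n : ℕ} {e : Fin n → V} {Φ Δ : Finset V} {γ : V} (hB : TypeBData Φ Δ n e)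
include hB

lemma inner_self_le_two (hγ : γ ∈ Φ) : ⟪γ, γ⟫ ≤ 2 := by
  have he := hB.1
  rw [← Finset.mem_coe, hB.2.1] at hγ
  rcases hγ with ⟨i, j, hij, rfl | rfl | rfl⟩ | ⟨i, rfl | rfl⟩
  · exact (he.inner_sub_self_of_ne hij).le
  · exact (he.inner_add_self_of_ne hij).le
  · rw [inner_neg_neg, he.inner_add_self_of_ne hij]
  · rw [he.real_inner_self]; norm_num
  · rw [inner_neg_neg, he.real_inner_self]; norm_num

lemma sub_mem_simple {i j : Fin n} (h : (i : ℕ) + 1 = j) : e i - e j ∈ Δ := by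
  rw [← Finset.mem_coe, hB.2.2]
  exact Or.inl ⟨i, by omega, congrArg (e i - e ·) (Fin.ext h.symm)⟩

lemma mem_simple_of_add_one_eq {i : Fin n} (h : (i : ℕ) + 1 = n) : e i ∈ Δ := by
  rw [← Finset.mem_coe, hB.2.2]
  exact Or.inr ⟨by omega, congrArg e (Fin.ext (by simp; omega))⟩

lemma isWord_sref_sub : ∀ (k : ℕ) (i j : Fin n), (i : ℕ) + k + 1 = j →
    IsWord Δ (sref (e i - e j)) (2 * k + 1)
  | 0, i, j, h => isWord_sref (hB.sub_mem_simple h)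
  | k + 1, i, j, h => by
    let i' : Fin n := ⟨i + 1, by omega⟩
    rw [← sref_sub_apply_sub hB.1 (i := i) (j := i') (k := j) (by simp [Fin.ext_iff, i'])
      (by simp [Fin.ext_iff]; omega) (by simp [Fin.ext_iff, i']; omega)]
    have := (isWord_sref (hB.sub_mem_simple (j := i') rfl)).sref_sref
      (isWord_sref_sub k i' j (by simp [i']; omega))
    rwa [show 1 + (2 * k + 1) + 1 = 2 * (k + 1) + 1 by ring] at this

lemma isWord_sref_e : ∀ (k : ℕ) (i : Fin n), (i : ℕ) + k + 1 = n →
    IsWord Δ (sref (e i)) (2 * k + 1)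
  | 0, i, h => isWord_sref (hB.mem_simple_of_add_one_eq h)
  | k + 1, i, h => by
    let i' : Fin n := ⟨i + 1, by omega⟩
    rw [← sref_sub_apply_right hB.1 (i := i) (j := i') (by simp [Fin.ext_iff, i'])]
    have := (isWord_sref (hB.sub_mem_simple (j := i') rfl)).sref_sref
      (isWord_sref_e k i' (by simp [i']; omega))
    rwa [show 1 + (2 * k + 1) + 1 = 2 * (k + 1) + 1 by ring] at this

lemma isWord_sref_add {a b : ℕ} {i j : Fin n} (hb : (i : ℕ) + b + 1 = j) (ha : (j : ℕ) + a + 1 = n) :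
    IsWord Δ (sref (e i + e j)) (2 * a + 1 + (2 * b + 1) + (2 * a + 1)) := by
  rw [← sref_apply_sub_right hB.1 (by simp [Fin.ext_iff]; omega)]
  exact (hB.isWord_sref_e a j ha).sref_sref (hB.isWord_sref_sub b i j hb)

lemma inner_two_rho (hRS : IsRS Φ Δ) (i : Fin n) :
    ⟪(2:ℝ) • rho Φ Δ, e i⟫ = 2 * ((n : ℝ) - (i : ℕ)) - 1 := by
  obtain ⟨k, hk⟩ : ∃ k, (i : ℕ) + k + 1 = n := ⟨n - 1 - i, by omega⟩
  induction k generalizing i with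
  | zero =>
    have hn : (n : ℝ) = (i : ℕ) + 1 := by exact_mod_cast hk.symm
    rw [hRS.inner_two_rho_of_simple (hB.mem_simple_of_add_one_eq hk), hB.1.real_inner_self, hn]
    ring
  | succ k ih =>
    let i' : Fin n := ⟨i + 1, by omega⟩
    have hsimple := hRS.inner_two_rho_of_simple (hB.sub_mem_simple (i := i) (j := i') rfl)
    rw [hB.1.inner_sub_self_of_ne (by simp [Fin.ext_iff, i']), inner_sub_right,
      ih i' (by simp [i']; omega)] at hsimple
    simp only [i'] at hsimple
    push_cast at hsimple
    linarith

lemma mem_pos_cases (hRS : IsRS Φ Δ) {β : V} (hβ : β ∈ Pos Φ Δ) :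
    (∃ i j : Fin n, i < j ∧ β = e i - e j) ∨ (∃ i j : Fin n, i < j ∧ β = e i + e j) ∨
      ∃ i, β = e i := by
  have hpos := hRS.inner_two_rho_pos hβ
  have hβΦ : β ∈ (Φ : Set V) := (Finset.mem_filter.mp hβ).1
  have hlt : ∀ i : Fin n, ((i : ℕ) : ℝ) + 1 ≤ n := fun i => by exact_mod_cast i.isLt
  rw [hB.2.1] at hβΦ
  rcases hβΦ with ⟨i, j, hij, rfl | rfl | rfl⟩ | ⟨i, rfl | rfl⟩
  · rw [inner_sub_right, hB.inner_two_rho hRS, hB.inner_two_rho hRS] at hpos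
    exact Or.inl ⟨i, j, Fin.lt_def.mpr (by exact_mod_cast (by linarith :
      ((i : ℕ) : ℝ) < (j : ℕ))), rfl⟩
  · rcases hij.lt_or_gt with h | h
    · exact Or.inr (Or.inl ⟨i, j, h, rfl⟩)
    · exact Or.inr (Or.inl ⟨j, i, h, add_comm _ _⟩)
  · rw [inner_neg_right, inner_add_right, hB.inner_two_rho hRS, hB.inner_two_rho hRS] at hpos
    linarith [hlt i, hlt j]
  · exact Or.inr (Or.inr ⟨i, rfl⟩)
  · rw [inner_neg_right, hB.inner_two_rho hRS] at hpos
    linarith [hlt i]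

lemma isQuantum_sub (hRS : IsRS Φ Δ) {i j : Fin n} (hij : i < j) (hβ : e i - e j ∈ Pos Φ Δ) :
    IsQuantum Φ Δ (e i - e j) := by
  obtain ⟨b, hb⟩ := Nat.exists_eq_add_of_lt (Fin.lt_def.mp hij)
  have hnorm := hB.1.inner_sub_self_of_ne hij.ne
  refine hRS.isQuantum_of_isWord hβ (fun γ hγ => hnorm ▸ hB.inner_self_le_two hγ)
    (hB.isWord_sref_sub b i j hb.symm) ?_
  have hjR : ((j : ℕ) : ℝ) = (i : ℕ) + b + 1 := by exact_mod_cast hb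
  rw [cpr_eq_inner_of_inner_self_eq_two hnorm, inner_sub_right, hB.inner_two_rho hRS,
    hB.inner_two_rho hRS, hjR]
  push_cast
  linarith

lemma isQuantum_add (hRS : IsRS Φ Δ) {i j : Fin n} (hij : i < j) (hβ : e i + e j ∈ Pos Φ Δ) :
    IsQuantum Φ Δ (e i + e j) := by
  obtain ⟨b, hb⟩ := Nat.exists_eq_add_of_lt (Fin.lt_def.mp hij)
  obtain ⟨a, ha⟩ := Nat.exists_eq_add_of_lt j.isLt
  have hnorm := hB.1.inner_add_self_of_ne hij.ne
  refine hRS.isQuantum_of_isWord hβ (fun γ hγ => hnorm ▸ hB.inner_self_le_two hγ)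
    (hB.isWord_sref_add hb.symm ha.symm) ?_
  have hjR : ((j : ℕ) : ℝ) = (i : ℕ) + b + 1 := by exact_mod_cast hb
  have hnR : (n : ℝ) = (j : ℕ) + a + 1 := by exact_mod_cast ha
  rw [cpr_eq_inner_of_inner_self_eq_two hnorm, inner_add_right, hB.inner_two_rho hRS,
    hB.inner_two_rho hRS, hnR, hjR]
  push_cast
  linarith

lemma isQuantum_e_iff (hRS : IsRS Φ Δ) (i : Fin n) : IsQuantum Φ Δ (e i) ↔ (i : ℕ) + 1 = n := by
  obtain ⟨k, hk⟩ : ∃ k, (i : ℕ) + k + 1 = n := ⟨n - 1 - i, by omega⟩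
  refine ⟨fun hq => ?_, fun h => hRS.isQuantum_of_simple (hB.mem_simple_of_add_one_eq h)⟩
  have hlen : (len Δ (sref (e i)) : ℝ) ≤ 2 * k + 1 := by
    exact_mod_cast (hB.isWord_sref_e k i hk).len_le
  have hnR : (n : ℝ) = (i : ℕ) + k + 1 := by exact_mod_cast hk.symm
  rw [IsQuantum, cpr, hB.inner_two_rho hRS, hB.1.real_inner_self, hnR] at hq
  have : k = 0 := by exact_mod_cast (by linarith : (k : ℝ) ≤ 0).antisymm (Nat.cast_nonneg k)
  omega

end TypeBData

end Pp

open Pp in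
/-- In type `B_n` (n ≥ 2) the quantum roots are exactly the long positive
roots (`⟪β,β⟫ = 2`) together with the short simple root `α_n = e_n`. -/
theorem stmt3 {V : Type*} [NormedAddCommGroup V] [InnerProductSpace ℝ V]
    (n : ℕ) (hn : 2 ≤ n) (e : Fin n → V) (Φ Δ : Finset V)
    (hRS : IsRS Φ Δ) (hB : TypeBData Φ Δ n e)
    (β : V) (hβ : β ∈ Pos Φ Δ) :
    IsQuantum Φ Δ β ↔ (⟪β, β⟫ = (2:ℝ) ∨ β = e ⟨n - 1, by omega⟩) := by
  rcases hB.mem_pos_cases hRS hβ with ⟨i, j, hij, rfl⟩ | ⟨i, j, hij, rfl⟩ | ⟨i, rfl⟩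
  · exact iff_of_true (hB.isQuantum_sub hRS hij hβ) (Or.inl (hB.1.inner_sub_self_of_ne hij.ne))
  · exact iff_of_true (hB.isQuantum_add hRS hij hβ) (Or.inl (hB.1.inner_add_self_of_ne hij.ne))
  · rw [hB.isQuantum_e_iff hRS, hB.1.real_inner_self, hB.1.linearIndependent.injective.eq_iff,
      Fin.ext_iff, show (1:ℝ) = 2 ↔ False by norm_num, false_or]
    change (i : ℕ) + 1 = n ↔ (i : ℕ) = n - 1
    omega
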